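/- Monogamy of entanglement: with K_A ⊆ V_A and K_B ⊆ V_B as in the GPT setup, let z ∈ K_A ⊗max K_B and suppose that the marginal y := (id_{V_A} ⊗ e_B)(z) ∈ V_A (via the canonical isomorphism V_A ⊗ ℝ ≅ V_A) is an extreme point of K_A. Then there exists w ∈ K_B such that z = y ⊗ w. -/

import Mathlib

/-!
Put `y = (id ⊗ e_B) z` and `w = (e_A ⊗ id) z`; positivity of `z` on products of effects makes
`w` a state of `K_B`. For an effect `g` on `K_B`, the vectors `(id ⊗ g) z` and `(id ⊗ (e_B - g)) z`
lie in the cone over `K_A` and add up to the extreme point `y`, so `(id ⊗ g) z = g(w) • y`. Effects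
span the dual of `V_B`, hence `z` and `y ⊗ w` agree on every product functional and are equal.
-/

open TensorProduct

/-- The linear functional `f ⊗ g` on `V ⊗ W` induced by linear functionals `f, g`. -/
noncomputable def tensorFunctional {V W : Type*} [AddCommGroup V] [Module ℝ V]
    [AddCommGroup W] [Module ℝ W] (f : V →ₗ[ℝ] ℝ) (g : W →ₗ[ℝ] ℝ) :
    V ⊗[ℝ] W →ₗ[ℝ] ℝ :=
  TensorProduct.lift ((LinearMap.mul ℝ ℝ).compl₁₂ f g)

/-- The maximal tensor product of two state spaces with unit functionals `eK, eL`. -/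
noncomputable def maxTensor {V W : Type*} [AddCommGroup V] [Module ℝ V]
    [AddCommGroup W] [Module ℝ W] (K : Set V) (L : Set W)
    (eK : V →ₗ[ℝ] ℝ) (eL : W →ₗ[ℝ] ℝ) : Set (V ⊗[ℝ] W) :=
  {z | (∀ f : V →ₗ[ℝ] ℝ, ∀ g : W →ₗ[ℝ] ℝ, (∀ x ∈ K, 0 ≤ f x ∧ f x ≤ 1) →
        (∀ y ∈ L, 0 ≤ g y ∧ g y ≤ 1) → 0 ≤ tensorFunctional f g z) ∧
      tensorFunctional eK eL z = 1}

/-- The partial application `(id ⊗ g)(z) ∈ V` of a functional `g` on `W` to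
`z ∈ V ⊗ W`, via the canonical isomorphism `V ⊗ ℝ ≃ V`. -/
noncomputable def partialApply {V W : Type*} [AddCommGroup V] [Module ℝ V]
    [AddCommGroup W] [Module ℝ W] (g : W →ₗ[ℝ] ℝ) : V ⊗[ℝ] W →ₗ[ℝ] V :=
  (TensorProduct.rid ℝ V).toLinearMap ∘ₗ TensorProduct.map LinearMap.id g

section Tensor

variable {V W : Type*} [AddCommGroup V] [Module ℝ V] [AddCommGroup W] [Module ℝ W]

@[simp] lemma tensorFunctional_tmul (f : V →ₗ[ℝ] ℝ) (g : W →ₗ[ℝ] ℝ) (a : V) (b : W) :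
    tensorFunctional f g (a ⊗ₜ b) = f a * g b := rfl

@[simp] lemma partialApply_tmul (g : W →ₗ[ℝ] ℝ) (a : V) (b : W) :
    partialApply g (a ⊗ₜ[ℝ] b) = g b • a := by
  simp [partialApply]

lemma partialApply_sub (g g' : W →ₗ[ℝ] ℝ) :
    (partialApply (g - g') : V ⊗[ℝ] W →ₗ[ℝ] V) = partialApply g - partialApply g' := by
  simp only [partialApply, ← LinearMap.lTensor_def, LinearMap.lTensor_sub, LinearMap.comp_sub]

noncomputable def leftApply (f : V →ₗ[ℝ] ℝ) : V ⊗[ℝ] W →ₗ[ℝ] W :=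
  (TensorProduct.lid ℝ W).toLinearMap ∘ₗ TensorProduct.map f LinearMap.id

@[simp] lemma leftApply_tmul (f : V →ₗ[ℝ] ℝ) (a : V) (b : W) :
    leftApply f (a ⊗ₜ[ℝ] b) = f a • b := by
  simp [leftApply]

lemma tensorFunctional_eq_apply_partialApply (f : V →ₗ[ℝ] ℝ) (g : W →ₗ[ℝ] ℝ) (z : V ⊗[ℝ] W) :
    tensorFunctional f g z = f (partialApply g z) := by
  induction z using TensorProduct.induction_on with
  | zero => simp
  | tmul a b => simp [mul_comm]
  | add x y hx hy => simp [hx, hy]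

lemma tensorFunctional_eq_apply_leftApply (f : V →ₗ[ℝ] ℝ) (g : W →ₗ[ℝ] ℝ) (z : V ⊗[ℝ] W) :
    tensorFunctional f g z = g (leftApply f z) := by
  induction z using TensorProduct.induction_on with
  | zero => simp
  | tmul a b => simp
  | add x y hx hy => simp [hx, hy]

lemma dualDistrib_tmul_eq_tensorFunctional (f : V →ₗ[ℝ] ℝ) (g : W →ₗ[ℝ] ℝ) :
    dualDistrib ℝ V W (f ⊗ₜ g) = tensorFunctional f g :=
  TensorProduct.ext' fun _ _ ↦ by simp [dualDistrib_apply]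

lemma TensorProduct.ext_tensorFunctional [FiniteDimensional ℝ V] [FiniteDimensional ℝ W]
    {z z' : V ⊗[ℝ] W} (h : ∀ f g, tensorFunctional f g z = tensorFunctional f g z') :
    z = z' := by
  rw [← sub_eq_zero, ← Module.forall_dual_apply_eq_zero_iff ℝ]
  intro φ
  obtain ⟨ψ, rfl⟩ := (dualDistribEquiv ℝ V W).surjective φ
  change dualDistrib ℝ V W ψ (z - z') = 0
  induction ψ using TensorProduct.induction_on with
  | zero => simp
  | tmul f g => rw [dualDistrib_tmul_eq_tensorFunctional, map_sub, h, sub_self]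
  | add x y hx hy => rw [map_add, LinearMap.add_apply, hx, hy, add_zero]

end Tensor

section Effects

variable {V : Type*} [AddCommGroup V] [Module ℝ V]

def effects (K : Set V) : Set (V →ₗ[ℝ] ℝ) := {f | ∀ x ∈ K, 0 ≤ f x ∧ f x ≤ 1}

/-- The cone over `K`, presented as the dual of the effect cone (see `mem_of_mem_stateCone`). -/
def stateCone (K : Set V) : Set V := {x | ∀ f ∈ effects K, 0 ≤ f x}

variable {K : Set V} {e : V →ₗ[ℝ] ℝ}

lemma mem_effects_of_forall_eq_one (he : ∀ x ∈ K, e x = 1) : e ∈ effects K :=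
  fun x hx ↦ by simp [he x hx]

lemma sub_mem_effects (he : ∀ x ∈ K, e x = 1) {g : V →ₗ[ℝ] ℝ} (hg : g ∈ effects K) :
    e - g ∈ effects K :=
  fun x hx ↦ by
    simp only [LinearMap.sub_apply, he x hx]
    exact ⟨by linarith [(hg x hx).2], by linarith [(hg x hx).1]⟩

lemma smul_mem_stateCone {x : V} (hx : x ∈ stateCone K) {c : ℝ} (hc : 0 ≤ c) :
    c • x ∈ stateCone K :=
  fun f hf ↦ by rw [map_smul, smul_eq_mul]; exact mul_nonneg hc (hx f hf)

end Effects

section Separation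

variable {V : Type*} [NormedAddCommGroup V] [NormedSpace ℝ V] [FiniteDimensional ℝ V]
  {K : Set V} {e : V →ₗ[ℝ] ℝ}

lemma exists_pos_smul_mem_effects (hK : IsCompact K) {g : V →ₗ[ℝ] ℝ} (hg : ∀ x ∈ K, 0 ≤ g x) :
    ∃ c : ℝ, 0 < c ∧ c • g ∈ effects K := by
  obtain ⟨C, hC⟩ := hK.exists_bound_of_continuousOn g.continuous_of_finiteDimensional.continuousOn
  refine ⟨(|C| + 1)⁻¹, by positivity, fun x hx ↦ ?_⟩
  have hgx : g x ≤ |C| := (le_abs_self _).trans ((hC x hx).trans (le_abs_self C))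
  simp only [LinearMap.smul_apply, smul_eq_mul]
  exact ⟨mul_nonneg (by positivity) (hg x hx), inv_mul_le_one_of_le₀ (by linarith) (by positivity)⟩

lemma exists_smul_add_smul_mem_effects (hK : IsCompact K) (he : ∀ x ∈ K, e x = 1)
    (g : V →ₗ[ℝ] ℝ) : ∃ c : ℝ, 0 < c ∧ ∃ d : ℝ, c • g + d • e ∈ effects K := by
  obtain ⟨C, hC⟩ := hK.exists_bound_of_continuousOn g.continuous_of_finiteDimensional.continuousOn
  have hnonneg : ∀ x ∈ K, 0 ≤ (g + |C| • e) x := fun x hx ↦ by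
    have hgx : |g x| ≤ |C| := (hC x hx).trans (le_abs_self C)
    simp only [LinearMap.add_apply, LinearMap.smul_apply, he x hx, smul_eq_mul, mul_one]
    linarith [neg_abs_le (g x)]
  obtain ⟨c, hc, hceff⟩ := exists_pos_smul_mem_effects hK hnonneg
  exact ⟨c, hc, c * |C|, by rwa [smul_add, smul_smul] at hceff⟩

lemma eq_of_forall_effects_apply_eq (hK : IsCompact K) (he : ∀ x ∈ K, e x = 1) {u v : V}
    (h : ∀ g ∈ effects K, g u = g v) : u = v := by
  rw [← sub_eq_zero, ← Module.forall_dual_apply_eq_zero_iff ℝ]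
  intro g
  obtain ⟨c, hc, d, hcd⟩ := exists_smul_add_smul_mem_effects hK he g
  have huv := h _ hcd
  have heuv := h e (mem_effects_of_forall_eq_one he)
  simp only [LinearMap.add_apply, LinearMap.smul_apply, smul_eq_mul, heuv] at huv
  rw [map_sub, sub_eq_zero]
  exact mul_left_cancel₀ hc.ne' (by linarith)

lemma eq_zero_of_mem_stateCone (hK : IsCompact K) (he : ∀ x ∈ K, e x = 1) {x : V}
    (hx : x ∈ stateCone K) (hex : e x = 0) : x = 0 :=
  eq_of_forall_effects_apply_eq hK he fun g hg ↦ by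
    have := hx _ (sub_mem_effects he hg)
    rw [LinearMap.sub_apply, hex] at this
    linarith [hx g hg, map_zero g]

/-- Separate `x` from `K` and shift the separating functional by a multiple of `e` to make it
nonnegative on `K`; a rescaling is then an effect that is negative at `x`. -/
lemma mem_of_mem_stateCone (hK : IsCompact K) (hconv : Convex ℝ K) (he : ∀ x ∈ K, e x = 1)
    {x : V} (hx : x ∈ stateCone K) (hex : e x = 1) : x ∈ K := by
  by_contra hxK
  obtain ⟨f, u, hfx, hfK⟩ := geometric_hahn_banach_point_closed hconv hK.isClosed hxK
  have hpos : ∀ k ∈ K, 0 ≤ ((f : V →ₗ[ℝ] ℝ) - u • e) k := fun k hk ↦ by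
    simp [he k hk, (hfK k hk).le]
  obtain ⟨c, hc, hceff⟩ := exists_pos_smul_mem_effects hK hpos
  have := hx _ hceff
  simp only [LinearMap.smul_apply, LinearMap.sub_apply, hex, smul_eq_mul, mul_one,
    ContinuousLinearMap.coe_coe] at this
  nlinarith

lemma inv_smul_mem_of_mem_stateCone (hK : IsCompact K) (hconv : Convex ℝ K)
    (he : ∀ x ∈ K, e x = 1) {x : V} (hx : x ∈ stateCone K) (hex : 0 < e x) :
    (e x)⁻¹ • x ∈ K :=
  mem_of_mem_stateCone hK hconv he (smul_mem_stateCone hx (inv_nonneg.2 hex.le))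
    (by rw [map_smul, smul_eq_mul, inv_mul_cancel₀ hex.ne'])

/-- Normalising `x` and `y - x` exhibits `y` as a proper convex combination of points of `K`. -/
lemma eq_smul_of_mem_extremePoints (hK : IsCompact K) (hconv : Convex ℝ K)
    (he : ∀ x ∈ K, e x = 1) {x y : V} (hy : y ∈ K.extremePoints ℝ) (hx : x ∈ stateCone K)
    (hyx : y - x ∈ stateCone K) : x = e x • y := by
  have hey : e x + e (y - x) = 1 := by rw [map_sub, add_sub_cancel, he y hy.1]
  have heff := mem_effects_of_forall_eq_one he
  rcases (hx e heff).eq_or_lt with hx0 | hxpos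
  · rw [← hx0, zero_smul, eq_zero_of_mem_stateCone hK he hx hx0.symm]
  rcases (hyx e heff).eq_or_lt with hyx0 | hyxpos
  · have hxy : x = y := (sub_eq_zero.1 (eq_zero_of_mem_stateCone hK he hyx hyx0.symm)).symm
    rw [hxy, he y hy.1, one_smul]
  have hseg : y ∈ openSegment ℝ ((e x)⁻¹ • x) ((e (y - x))⁻¹ • (y - x)) :=
    ⟨e x, e (y - x), hxpos, hyxpos, hey, by
      rw [smul_smul, smul_smul, mul_inv_cancel₀ hxpos.ne', mul_inv_cancel₀ hyxpos.ne',
        one_smul, one_smul, add_sub_cancel]⟩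
  have hxy := hy.2 (inv_smul_mem_of_mem_stateCone hK hconv he hx hxpos)
    (inv_smul_mem_of_mem_stateCone hK hconv he hyx hyxpos) hseg
  rw [← hxy, smul_smul, mul_inv_cancel₀ hxpos.ne', one_smul]

end Separation

section MaxTensor

variable {V W : Type*} [AddCommGroup V] [Module ℝ V] [AddCommGroup W] [Module ℝ W]
  {K : Set V} {L : Set W} {eK : V →ₗ[ℝ] ℝ} {eL : W →ₗ[ℝ] ℝ} {z : V ⊗[ℝ] W}

lemma partialApply_mem_stateCone (hz : z ∈ maxTensor K L eK eL) {g : W →ₗ[ℝ] ℝ}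
    (hg : g ∈ effects L) : partialApply g z ∈ stateCone K :=
  fun f hf ↦ tensorFunctional_eq_apply_partialApply f g z ▸ hz.1 f g hf hg

lemma leftApply_mem_stateCone (hz : z ∈ maxTensor K L eK eL) {f : V →ₗ[ℝ] ℝ}
    (hf : f ∈ effects K) : leftApply f z ∈ stateCone L :=
  fun g hg ↦ tensorFunctional_eq_apply_leftApply f g z ▸ hz.1 f g hf hg

end MaxTensor

/-- Effects of `L` span the dual of `W`, so the hypothesis determines every slice of `z`. -/
lemma eq_tmul_of_partialApply_eq {V W : Type*} [AddCommGroup V] [Module ℝ V]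
    [FiniteDimensional ℝ V] [NormedAddCommGroup W] [NormedSpace ℝ W] [FiniteDimensional ℝ W]
    {L : Set W} {e : W →ₗ[ℝ] ℝ} (hL : IsCompact L) (he : ∀ x ∈ L, e x = 1)
    {z : V ⊗[ℝ] W} {y : V} {w : W} (h : ∀ g ∈ effects L, partialApply g z = g w • y) :
    z = y ⊗ₜ w := by
  refine TensorProduct.ext_tensorFunctional fun f g ↦ ?_
  have hleft : leftApply f z = f y • w := eq_of_forall_effects_apply_eq hL he fun g hg ↦ by
    rw [← tensorFunctional_eq_apply_leftApply, tensorFunctional_eq_apply_partialApply, h g hg,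
      map_smul, map_smul, smul_eq_mul, smul_eq_mul, mul_comm]
  rw [tensorFunctional_eq_apply_leftApply, hleft, map_smul, smul_eq_mul, tensorFunctional_tmul]

theorem monogamy_of_entanglement_general
    {VA VB : Type*} [NormedAddCommGroup VA] [NormedSpace ℝ VA] [FiniteDimensional ℝ VA]
    [NormedAddCommGroup VB] [NormedSpace ℝ VB] [FiniteDimensional ℝ VB]
    (KA : Set VA) (KB : Set VB)
    (hcompA : IsCompact KA) (hconvA : Convex ℝ KA)
    (hcompB : IsCompact KB) (hconvB : Convex ℝ KB)
    (eA : VA →ₗ[ℝ] ℝ) (eB : VB →ₗ[ℝ] ℝ)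
    (heA : ∀ x ∈ KA, eA x = 1) (heB : ∀ y ∈ KB, eB y = 1)
    (z : VA ⊗[ℝ] VB) (hz : z ∈ maxTensor KA KB eA eB)
    (hext : partialApply eB z ∈ Set.extremePoints ℝ KA) :
    ∃ w ∈ KB, z = (partialApply eB z) ⊗ₜ[ℝ] w := by
  set y := partialApply eB z
  set w := leftApply eA z
  have hgw : ∀ g : VB →ₗ[ℝ] ℝ, g w = eA (partialApply g z) := fun g ↦ by
    rw [← tensorFunctional_eq_apply_leftApply, tensorFunctional_eq_apply_partialApply]
  have hwK : w ∈ KB := mem_of_mem_stateCone hcompB hconvB heB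
    (leftApply_mem_stateCone hz (mem_effects_of_forall_eq_one heA))
    (by rw [hgw, ← tensorFunctional_eq_apply_partialApply]; exact hz.2)
  refine ⟨w, hwK, eq_tmul_of_partialApply_eq hcompB heB fun g hg ↦ ?_⟩
  have hyg : y - partialApply g z ∈ stateCone KA := by
    rw [← LinearMap.sub_apply, ← partialApply_sub]
    exact partialApply_mem_stateCone hz (sub_mem_effects heB hg)
  rw [hgw]
  exact eq_smul_of_mem_extremePoints hcompA hconvA heA hext (partialApply_mem_stateCone hz hg) hyg

/-- monogamy of entanglement: if the marginal of a bipartite state `z`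
in the maximal tensor product is an extreme point `y` of `K_A`, then `z = y ⊗ w` for
some `w ∈ K_B`. -/
theorem monogamy_of_entanglement
    {VA VB : Type*} [NormedAddCommGroup VA] [NormedSpace ℝ VA] [FiniteDimensional ℝ VA]
    [NormedAddCommGroup VB] [NormedSpace ℝ VB] [FiniteDimensional ℝ VB]
    (KA : Set VA) (KB : Set VB)
    (hneA : KA.Nonempty) (hcompA : IsCompact KA) (hconvA : Convex ℝ KA)
    (hneB : KB.Nonempty) (hcompB : IsCompact KB) (hconvB : Convex ℝ KB)
    (hspanA : Submodule.span ℝ KA = ⊤) (hspanB : Submodule.span ℝ KB = ⊤)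
    (eA : VA →ₗ[ℝ] ℝ) (eB : VB →ₗ[ℝ] ℝ)
    (heA : ∀ x ∈ KA, eA x = 1) (heB : ∀ y ∈ KB, eB y = 1)
    (z : VA ⊗[ℝ] VB) (hz : z ∈ maxTensor KA KB eA eB)
    (hext : partialApply eB z ∈ Set.extremePoints ℝ KA) :
    ∃ w ∈ KB, z = (partialApply eB z) ⊗ₜ[ℝ] w :=
  monogamy_of_entanglement_general KA KB hcompA hconvA hcompB hconvB eA eB heA heB z hz hext
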